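/- Let p be a prime, N ≥ 1, e ≥ 0 an integer, and let ν be an N×N matrix over ℤ_p with ν^p = 0. Set u := 1 + p^e·ν and β := Σ_{k=1}^{p−1} (−1)^{k+1} p^{e(k−1)} k^{−1} ν^k. Let F be a polynomial over ℤ_p in N² variables indexed by the pairs (i,j), 1 ≤ i,j ≤ N. If F vanishes when the variables are evaluated at the entries of u^m for every natural number m, then the polynomial in ℤ_p[t] obtained by evaluating the variables of F at the corresponding entries of E_p(tβ) is the zero polynomial. -/

import Mathlib

/-- The one-variable truncated exponential `E_p(tM) = Σ_{k=0}^{p-1} (k!)⁻¹ t^k M^k`,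
a matrix over `ℤ_p[t]`. -/
noncomputable def truncExpT (p : ℕ) [Fact p.Prime] {N : ℕ}
    (M : Matrix (Fin N) (Fin N) ℤ_[p]) : Matrix (Fin N) (Fin N) (Polynomial ℤ_[p]) :=
  ∑ k ∈ Finset.range p,
    (Polynomial.C (Ring.inverse ((k.factorial : ℤ_[p]))) * Polynomial.X ^ k) •
      (M.map Polynomial.C) ^ k

/-!
Modulo `ν ^ p` the truncated exponential `E` and logarithm `L` behave like the true ones: if
`a ^ p = 0` then `E (s • a) * E (t • a) = E ((s + t) • a)` (the Cauchy product only loses terms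
`a ^ n` with `n ≥ p`), and `E (L a) = 1 + a`, because `G = E (L X)` satisfies `G(0) = 1` and
`(1 + X) G' ≡ G` modulo `X ^ (p - 1)`, which forces `G ≡ 1 + X` modulo `X ^ p`. As
`p ^ e • β = L (p ^ e • ν)`, this gives `E ((m * p ^ e) • β) = (1 + p ^ e • ν) ^ m`, so the polynomial
`F (E (t • β))` vanishes at the infinitely many points `t = m * p ^ e` and is therefore zero.
-/

open Polynomial Finset
open scoped Nat

namespace PadicInt

variable {p : ℕ} [Fact p.Prime]

theorem isUnit_natCast_of_coprime {n : ℕ} (h : p.Coprime n) : IsUnit (n : ℤ_[p]) :=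
  isUnit_iff.2 (norm_natCast_eq_one_iff.2 h)

theorem isUnit_natCast_of_pos_of_lt {k : ℕ} (h0 : 0 < k) (h : k < p) : IsUnit (k : ℤ_[p]) :=
  isUnit_natCast_of_coprime <|
    (Fact.out : p.Prime).coprime_iff_not_dvd.2 (Nat.not_dvd_of_pos_of_lt h0 h)

theorem isUnit_factorial_of_lt {k : ℕ} (h : k < p) : IsUnit (k ! : ℤ_[p]) :=
  isUnit_natCast_of_coprime ((Fact.out : p.Prime).coprime_factorial_of_lt h)

theorem inverse_factorial_succ_mul {k : ℕ} (h : k + 1 < p) :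
    Ring.inverse ((k + 1)! : ℤ_[p]) * (k + 1 : ℕ) = Ring.inverse (k ! : ℤ_[p]) := by
  rw [Nat.factorial_succ, Nat.cast_mul, Ring.mul_inverse_rev, mul_assoc,
    Ring.inverse_mul_cancel _ (isUnit_natCast_of_pos_of_lt k.succ_pos h), mul_one]

theorem inverse_factorial_mul_choose {n m : ℕ} (hn : n < p) (hm : m ≤ n) :
    Ring.inverse (n ! : ℤ_[p]) * n.choose m =
      Ring.inverse (m ! : ℤ_[p]) * Ring.inverse ((n - m)! : ℤ_[p]) := by
  refine (isUnit_factorial_of_lt hn).mul_left_cancel ?_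
  rw [← mul_assoc, Ring.mul_inverse_cancel _ (isUnit_factorial_of_lt hn), one_mul,
    ← Nat.choose_mul_factorial_mul_factorial hm, Nat.cast_mul, Nat.cast_mul,
    mul_assoc (n.choose m : ℤ_[p]), mul_assoc, mul_mul_mul_comm,
    Ring.mul_inverse_cancel _ (isUnit_factorial_of_lt (by omega)),
    Ring.mul_inverse_cancel _ (isUnit_factorial_of_lt (by omega)), mul_one, mul_one]

end PadicInt

namespace Polynomial

theorem coeff_one_add_X_mul_derivative_sub {R : Type*} [CommRing R] (H : R[X]) (n : ℕ) :
    ((1 + X) * derivative H - H).coeff n = (n + 1) * H.coeff (n + 1) + (n - 1) * H.coeff n := by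
  rcases n with _ | n
  · simp only [coeff_sub, mul_coeff_zero, coeff_add, coeff_one_zero, coeff_X_zero,
      coeff_derivative]
    ring
  · simp only [add_mul, one_mul, coeff_sub, coeff_add, coeff_derivative, coeff_X_mul]
    push_cast
    ring

theorem X_pow_succ_dvd_of_X_pow_dvd_one_add_X_mul_derivative_sub {R : Type*} [CommRing R]
    [NoZeroDivisors R] [CharZero R] {H : R[X]} {n : ℕ}
    (h0 : H.coeff 0 = 0) (h : X ^ n ∣ (1 + X) * derivative H - H) : X ^ (n + 1) ∣ H := by
  rw [X_pow_dvd_iff] at h ⊢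
  intro d hd
  induction d with
  | zero => exact h0
  | succ d ih =>
    have hrel := h d (by omega)
    rw [coeff_one_add_X_mul_derivative_sub, ih (by omega), mul_zero, add_zero] at hrel
    exact (mul_eq_zero.1 hrel).resolve_left (by exact_mod_cast d.succ_ne_zero)

theorem aeval_eq_zero_of_X_pow_dvd {R A : Type*} [CommSemiring R] [Semiring A]
    [Algebra R A] {a : A} {n : ℕ} (ha : a ^ n = 0) {f : R[X]} (h : X ^ n ∣ f) :
    aeval a f = 0 := by
  obtain ⟨q, rfl⟩ := h
  rw [map_mul, map_pow, aeval_X, ha, zero_mul]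

end Polynomial

theorem MvPolynomial.polynomial_eval_aeval {R σ : Type*} [CommSemiring R] (x : R)
    (g : σ → R[X]) (F : MvPolynomial σ R) :
    (aeval g F).eval x = eval (fun i => (g i).eval x) F := by
  rw [← Polynomial.coe_aeval_eq_eval, ← AlgHom.comp_apply, comp_aeval]
  rfl

section TruncatedExpLog

variable (p : ℕ) [Fact p.Prime] {A B : Type*} [Ring A] [Algebra ℤ_[p] A] [Ring B]
  [Algebra ℤ_[p] B]

/- `Ring.inverse` is only applied to `k !` and `k` with `k < p`, which are units of `ℤ_[p]`. -/
noncomputable def truncExp (a : A) : A :=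
  ∑ k ∈ range p, Ring.inverse (k ! : ℤ_[p]) • a ^ k

noncomputable def truncLog (a : A) : A :=
  ∑ k ∈ Icc 1 (p - 1), ((-1) ^ (k + 1) * Ring.inverse (k : ℤ_[p])) • a ^ k

variable {p}

theorem map_truncExp (f : A →ₐ[ℤ_[p]] B) (a : A) : f (truncExp p a) = truncExp p (f a) := by
  simp only [truncExp, map_sum, map_smul, map_pow]

theorem map_truncLog (f : A →ₐ[ℤ_[p]] B) (a : A) : f (truncLog p a) = truncLog p (f a) := by
  simp only [truncLog, map_sum, map_smul, map_pow]

variable (A) in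
theorem truncExp_zero : truncExp p (0 : A) = 1 := by
  rw [truncExp, sum_eq_single_of_mem 0 (mem_range.2 (Fact.out : p.Prime).pos)]
  · simp
  · intro k _ hk
    rw [zero_pow hk, smul_zero]

variable (A) in
theorem truncLog_zero : truncLog p (0 : A) = 0 :=
  sum_eq_zero fun k hk => by rw [zero_pow (Nat.one_le_iff_ne_zero.1 (mem_Icc.1 hk).1), smul_zero]

end TruncatedExpLog

section TruncatedPolynomial

variable {p : ℕ} [Fact p.Prime]

theorem X_dvd_truncLog_X : (X : ℤ_[p][X]) ∣ truncLog p X := by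
  rw [X_dvd_iff, coeff_zero_eq_eval_zero, ← coe_aeval_eq_eval, map_truncLog, aeval_X,
    truncLog_zero]

theorem derivative_truncLog_X :
    derivative (truncLog p (X : ℤ_[p][X])) = ∑ i ∈ range (p - 1), (-X) ^ i := by
  rw [truncLog, map_sum, ← Ico_add_one_right_eq_Icc, sum_Ico_eq_sum_range, Nat.add_sub_cancel]
  refine sum_congr rfl fun i hi => ?_
  have hunit := PadicInt.isUnit_natCast_of_pos_of_lt (p := p) i.succ_pos (by grind)
  rw [derivative_smul, derivative_X_pow, add_comm 1 i, Nat.add_sub_cancel, smul_eq_C_mul,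
    ← mul_assoc, ← C_mul, mul_assoc, Ring.inverse_mul_cancel _ hunit, mul_one,
    neg_pow (X : ℤ_[p][X]), show (-1 : ℤ_[p]) ^ (i + 1 + 1) = (-1) ^ i by ring, map_pow,
    map_neg, map_one]

theorem one_add_X_mul_derivative_truncLog_X :
    (1 + X) * derivative (truncLog p (X : ℤ_[p][X])) = 1 - (-X) ^ (p - 1) := by
  rw [derivative_truncLog_X, ← mul_neg_geom_sum, sub_neg_eq_add]

theorem derivative_truncExp (f : ℤ_[p][X]) :
    derivative (truncExp p f) =
      (truncExp p f - Ring.inverse ((p - 1)! : ℤ_[p]) • f ^ (p - 1)) * derivative f := by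
  obtain ⟨n, rfl⟩ := Nat.exists_eq_add_one_of_ne_zero (Fact.out : p.Prime).ne_zero
  rw [Nat.add_sub_cancel, truncExp, map_sum, sum_range_succ', sum_range_succ,
    add_sub_cancel_right, sum_mul]
  simp only [pow_zero, derivative_smul, derivative_one, smul_zero, add_zero]
  refine sum_congr rfl fun k hk => ?_
  rw [derivative_pow, Nat.add_sub_cancel, mul_assoc, smul_eq_C_mul, smul_eq_C_mul, ← mul_assoc,
    ← C_mul, PadicInt.inverse_factorial_succ_mul (by grind), mul_assoc]

theorem X_pow_dvd_one_add_X_mul_derivative_truncExp_truncLog_X_sub :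
    (X : ℤ_[p][X]) ^ (p - 1) ∣
      (1 + X) * derivative (truncExp p (truncLog p X)) - truncExp p (truncLog p X) := by
  set L := truncLog p (X : ℤ_[p][X])
  set G := truncExp p L
  set c := Ring.inverse ((p - 1)! : ℤ_[p])
  have hG : (1 + X) * derivative G - G =
      -((-X) ^ (p - 1) * G) - (1 - (-X) ^ (p - 1)) * (c • L ^ (p - 1)) := by
    linear_combination (1 + X) * derivative_truncExp L +
      (G - c • L ^ (p - 1)) * one_add_X_mul_derivative_truncLog_X (p := p)
  have hX : (X : ℤ_[p][X]) ^ (p - 1) ∣ (-X) ^ (p - 1) := by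
    rw [neg_pow]
    exact dvd_mul_left _ _
  have hL : (X : ℤ_[p][X]) ^ (p - 1) ∣ c • L ^ (p - 1) := by
    rw [smul_eq_C_mul]
    exact (pow_dvd_pow_of_dvd X_dvd_truncLog_X _).mul_left _
  rw [hG]
  exact dvd_sub (dvd_neg.2 (hX.mul_right _)) (hL.mul_left _)

theorem X_pow_dvd_truncExp_truncLog_X_sub :
    (X : ℤ_[p][X]) ^ p ∣ truncExp p (truncLog p X) - (1 + X) := by
  set G := truncExp p (truncLog p (X : ℤ_[p][X]))
  have h0 : (G - (1 + X)).coeff 0 = 0 := by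
    rw [coeff_zero_eq_eval_zero, ← coe_aeval_eq_eval, map_sub, map_truncExp, map_truncLog,
      aeval_X, truncLog_zero, truncExp_zero, map_add, map_one, aeval_X, add_zero, sub_self]
  have hode : (1 + X) * derivative (G - (1 + X)) - (G - (1 + X)) =
      (1 + X) * derivative G - G := by
    rw [derivative_sub, derivative_add, derivative_one, derivative_X]
    ring
  have h := X_pow_succ_dvd_of_X_pow_dvd_one_add_X_mul_derivative_sub h0
    (by rw [hode]; exact X_pow_dvd_one_add_X_mul_derivative_truncExp_truncLog_X_sub)
  rwa [Nat.sub_add_cancel (Fact.out : p.Prime).one_le] at h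

end TruncatedPolynomial

section Nilpotent

variable {p : ℕ} [Fact p.Prime] {A : Type*} [Ring A] [Algebra ℤ_[p] A] {a : A}

theorem truncExp_truncLog (ha : a ^ p = 0) : truncExp p (truncLog p a) = 1 + a := by
  have h := aeval_eq_zero_of_X_pow_dvd ha X_pow_dvd_truncExp_truncLog_X_sub
  rwa [map_sub, map_truncExp, map_truncLog, map_add, map_one, aeval_X, sub_eq_zero] at h

theorem truncLog_pow_eq_zero (ha : a ^ p = 0) : truncLog p a ^ p = 0 := by
  rw [← aeval_X (R := ℤ_[p]) a, ← map_truncLog, ← map_pow]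
  exact aeval_eq_zero_of_X_pow_dvd ha (pow_dvd_pow_of_dvd X_dvd_truncLog_X p)

theorem truncExp_add_smul (ha : a ^ p = 0) (s t : ℤ_[p]) :
    truncExp p ((s + t) • a) = truncExp p (s • a) * truncExp p (t • a) := by
  set c : ℕ → ℤ_[p] := fun k => Ring.inverse (k ! : ℤ_[p])
  set g : ℕ → ℕ → A := fun i j => (c i * s ^ i * (c j * t ^ j)) • a ^ (i + j)
  have hexp : truncExp p ((s + t) • a) = ∑ n ∈ range p, ∑ m ∈ range (n + 1), g m (n - m) := by
    refine sum_congr rfl fun n hn => ?_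
    rw [_root_.smul_pow, smul_smul, add_pow, mul_sum, sum_smul]
    refine sum_congr rfl fun m hm => ?_
    have hmn : m ≤ n := Nat.lt_succ_iff.1 (mem_range.1 hm)
    dsimp only [g]
    rw [Nat.add_sub_cancel' hmn]
    congr 1
    linear_combination (s ^ m * t ^ (n - m)) *
      PadicInt.inverse_factorial_mul_choose (mem_range.1 hn) hmn
  have hprod : truncExp p (s • a) * truncExp p (t • a) =
      ∑ i ∈ range p, ∑ j ∈ range (p - i), g i j := by
    rw [truncExp, truncExp, sum_mul_sum]
    refine sum_congr rfl fun i hi => ?_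
    have hterm : ∀ j, c i • (s • a) ^ i * c j • (t • a) ^ j = g i j := fun j => by
      simp only [g, _root_.smul_pow, smul_mul_smul_comm, smul_smul, pow_add]
    have hvanish : ∀ j ∈ range p, j ∉ range (p - i) → g i j = 0 := fun j _ hj => by
      dsimp only [g]
      rw [pow_eq_zero_of_le (by grind) ha, smul_zero]
    rw [sum_subset (range_subset_range.2 (Nat.sub_le p i)) hvanish]
    exact sum_congr rfl fun j _ => hterm j
  rw [hexp, hprod, sum_range_diag_flip]

theorem truncExp_natCast_smul (ha : a ^ p = 0) (m : ℕ) :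
    truncExp p ((m : ℤ_[p]) • a) = truncExp p a ^ m := by
  induction m with
  | zero => rw [Nat.cast_zero, zero_smul, truncExp_zero, pow_zero]
  | succ m ih => rw [Nat.cast_succ, truncExp_add_smul ha, ih, one_smul, pow_succ]

theorem truncLog_smul (c : ℤ_[p]) (a : A) :
    truncLog p (c • a) =
      c • ∑ k ∈ Icc 1 (p - 1),
        ((-1) ^ (k + 1) * c ^ (k - 1) * Ring.inverse (k : ℤ_[p])) • a ^ k := by
  rw [truncLog, smul_sum]
  refine sum_congr rfl fun k hk => ?_
  have hc : c ^ k = c * c ^ (k - 1) := by rw [← pow_succ', Nat.sub_add_cancel (mem_Icc.1 hk).1]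
  rw [_root_.smul_pow, smul_smul, smul_smul, hc]
  ring_nf

end Nilpotent

theorem truncExpT_eq_truncExp (p : ℕ) [Fact p.Prime] {N : ℕ} (M : Matrix (Fin N) (Fin N) ℤ_[p]) :
    truncExpT p M = truncExp p ((X : ℤ_[p][X]) • M.map C) := by
  refine sum_congr rfl fun k _ => ?_
  rw [_root_.smul_pow, mul_smul, ← algebraMap_eq, algebraMap_smul]

theorem map_eval_truncExpT {p : ℕ} [Fact p.Prime] {N : ℕ} (M : Matrix (Fin N) (Fin N) ℤ_[p])
    (s : ℤ_[p]) : (truncExpT p M).map (eval s) = truncExp p (s • M) := by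
  have h := map_truncExp (aeval s).mapMatrix ((X : ℤ_[p][X]) • M.map C)
  rw [← truncExpT_eq_truncExp, AlgHom.mapMatrix_apply, AlgHom.mapMatrix_apply] at h
  rw [← coe_aeval_eq_eval, h]
  congr 1
  ext i j
  simp only [coe_aeval_eq_eval, Matrix.map_apply, Matrix.smul_apply, smul_eq_mul, eval_mul,
    eval_X, eval_C]

theorem vanishing_on_powers_implies_vanishing_on_one_param_subgroup_general
    (p : ℕ) [Fact p.Prime] (N : ℕ) (e : ℕ)
    (ν : Matrix (Fin N) (Fin N) ℤ_[p]) (hν : ν ^ p = 0)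
    (F : MvPolynomial (Fin N × Fin N) ℤ_[p])
    (hF : ∀ m : ℕ,
      MvPolynomial.eval (fun ij => ((1 + (p : ℤ_[p]) ^ e • ν) ^ m) ij.1 ij.2) F = 0) :
    MvPolynomial.aeval
      (fun ij : Fin N × Fin N =>
        truncExpT p
          (∑ k ∈ Finset.Icc 1 (p - 1),
            ((-1 : ℤ_[p]) ^ (k + 1) * (p : ℤ_[p]) ^ (e * (k - 1)) * Ring.inverse (k : ℤ_[p])) •
              ν ^ k) ij.1 ij.2) F = 0 := by
  set β := ∑ k ∈ Finset.Icc 1 (p - 1),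
    ((-1 : ℤ_[p]) ^ (k + 1) * (p : ℤ_[p]) ^ (e * (k - 1)) * Ring.inverse (k : ℤ_[p])) • ν ^ k
  have hu : ((p : ℤ_[p]) ^ e • ν) ^ p = 0 := by rw [_root_.smul_pow, hν, smul_zero]
  have hβ : (p : ℤ_[p]) ^ e • β = truncLog p ((p : ℤ_[p]) ^ e • ν) := by
    simp only [β, truncLog_smul, pow_mul]
  have hsample (m : ℕ) : truncExp p (((m : ℤ_[p]) * (p : ℤ_[p]) ^ e) • β) =
      (1 + (p : ℤ_[p]) ^ e • ν) ^ m := by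
    rw [mul_smul, hβ, truncExp_natCast_smul (truncLog_pow_eq_zero hu), truncExp_truncLog hu]
  have hinj : Function.Injective fun m : ℕ => (m : ℤ_[p]) * (p : ℤ_[p]) ^ e :=
    (mul_left_injective₀ (pow_ne_zero e (Nat.cast_ne_zero.2 (Fact.out : p.Prime).ne_zero))).comp
      Nat.cast_injective
  refine eq_zero_of_infinite_isRoot _ ((Set.infinite_range_of_injective hinj).mono ?_)
  rintro _ ⟨m, rfl⟩
  have hroot := hF m
  rw [← hsample, ← map_eval_truncExpT] at hroot
  rwa [Set.mem_ofPred_eq, IsRoot.def, MvPolynomial.polynomial_eval_aeval]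

/-- Let `u = 1 + p^e ν` with `ν^p = 0` and `β = Σ_{k=1}^{p-1} (-1)^{k+1} p^{e(k-1)} k⁻¹ ν^k`.
If a polynomial `F` in the `N²` matrix entries vanishes at `u^m` for every natural `m`, then
it vanishes at `E_p(tβ)` as a polynomial in `t`. -/
theorem vanishing_on_powers_implies_vanishing_on_one_param_subgroup
    (p : ℕ) [Fact p.Prime] (N : ℕ) (hN : 1 ≤ N) (e : ℕ)
    (ν : Matrix (Fin N) (Fin N) ℤ_[p]) (hν : ν ^ p = 0)
    (F : MvPolynomial (Fin N × Fin N) ℤ_[p])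
    (hF : ∀ m : ℕ,
      MvPolynomial.eval (fun ij => ((1 + (p : ℤ_[p]) ^ e • ν) ^ m) ij.1 ij.2) F = 0) :
    MvPolynomial.aeval
      (fun ij : Fin N × Fin N =>
        truncExpT p
          (∑ k ∈ Finset.Icc 1 (p - 1),
            ((-1 : ℤ_[p]) ^ (k + 1) * (p : ℤ_[p]) ^ (e * (k - 1)) * Ring.inverse (k : ℤ_[p])) •
              ν ^ k) ij.1 ij.2) F = 0 :=
  vanishing_on_powers_implies_vanishing_on_one_param_subgroup_general p N e ν hν F hF
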